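/- arXiv:2210.07962 — 5 statements merged into one kernel-verified Lean document; each statement's English description precedes it below -/
import Mathlib

section
/- Let G be a weighted hypergraph with all vertex magnitudes positive, and let ∇ = max_{e∈E} size(e) be the maximum edge size (number of vertices incident to an edge). Then the largest eigenvalue of the normalized Laplacian L(G) = M^{-1/2} H H^T M^{-1/2} satisfies λ_1(L(G)) ≤ ∇. -/
/-!
With `B = M^{-1/2} H` the Laplacian is `L = B * Bᵀ`, so `xᵀ L x = ∑ₑ (∑ᵢ xᵢ Bᵢₑ)²`. Each column
of `B` has at most `∇` nonzero entries, so Cauchy–Schwarz bounds the `e`-th term by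
`∇ ∑ᵢ xᵢ² Bᵢₑ²`; every row of `B` has squared norm at most `1`, so the total is at most
`∇ ‖x‖²`, and the Rayleigh quotient of an eigenvector gives the eigenvalue bound.
-/

open Matrix BigOperators Finset

theorem sq_sum_le_card_support_mul_sum_sq {ι α : Type*} [Fintype ι] [Semiring α] [LinearOrder α]
    [IsStrictOrderedRing α] [ExistsAddOfLE α] (f : ι → α) :
    (∑ i, f i) ^ 2 ≤ #{i | f i ≠ 0} * ∑ i, f i ^ 2 := by
  calc (∑ i, f i) ^ 2 = (∑ i ∈ {i | f i ≠ 0}, f i) ^ 2 := by rw [sum_filter_ne_zero]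
    _ ≤ #{i | f i ≠ 0} * ∑ i ∈ {i | f i ≠ 0}, f i ^ 2 :=
        sq_sum_le_card_mul_sum_sq
    _ ≤ #{i | f i ≠ 0} * ∑ i, f i ^ 2 := by
      gcongr
      · exact fun i _ _ => sq_nonneg (f i)
      · exact subset_univ _

theorem Matrix.dotProduct_mul_transpose_mulVec {ι κ α : Type*} [Fintype ι] [Fintype κ]
    [CommSemiring α] (B : Matrix ι κ α) (x : ι → α) :
    x ⬝ᵥ (B * Bᵀ) *ᵥ x = (x ᵥ* B) ⬝ᵥ (x ᵥ* B) := by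
  rw [← mulVec_mulVec, dotProduct_mulVec, mulVec_transpose]

theorem Matrix.dotProduct_mul_transpose_mulVec_le {ι κ α : Type*} [Fintype ι] [Fintype κ]
    [CommRing α] [LinearOrder α] [IsStrictOrderedRing α] (B : Matrix ι κ α) (s : ℕ)
    (hrow : ∀ i, ∑ e, B i e ^ 2 ≤ 1) (hcol : ∀ e, #{i | B i e ≠ 0} ≤ s) (x : ι → α) :
    x ⬝ᵥ (B * Bᵀ) *ᵥ x ≤ s * (x ⬝ᵥ x) := by
  have hcolumn : ∀ e, (x ᵥ* B) e ^ 2 ≤ s * ∑ i, (x i * B i e) ^ 2 := fun e =>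
    calc (x ᵥ* B) e ^ 2 ≤ #{i | x i * B i e ≠ 0} * ∑ i, (x i * B i e) ^ 2 :=
          sq_sum_le_card_support_mul_sum_sq _
      _ ≤ s * ∑ i, (x i * B i e) ^ 2 := by
          gcongr
          exact_mod_cast (card_le_card <|
            monotone_filter_right _ fun i _ => right_ne_zero_of_mul).trans (hcol e)
  calc x ⬝ᵥ (B * Bᵀ) *ᵥ x = ∑ e, (x ᵥ* B) e ^ 2 := by
        rw [dotProduct_mul_transpose_mulVec]; simp only [dotProduct, sq]
    _ ≤ ∑ e, s * ∑ i, (x i * B i e) ^ 2 := sum_le_sum fun e _ => hcolumn e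
    _ = s * ∑ i, x i ^ 2 * ∑ e, B i e ^ 2 := by
        rw [← mul_sum, sum_comm]; simp only [mul_pow, mul_sum]
    _ ≤ s * ∑ i, x i ^ 2 := by
        gcongr with i; exact mul_le_of_le_one_right (sq_nonneg _) (hrow i)
    _ = s * (x ⬝ᵥ x) := by simp only [dotProduct, sq]

theorem Matrix.IsHermitian.eigenvalues_le_of_dotProduct_mulVec_le {ι : Type*} [Fintype ι]
    [DecidableEq ι] {A : Matrix ι ι ℝ} (hA : A.IsHermitian) {c : ℝ}
    (h : ∀ x, x ⬝ᵥ A *ᵥ x ≤ c * (x ⬝ᵥ x)) (j : ι) : hA.eigenvalues j ≤ c := by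
  set v := hA.eigenvectorBasis j
  have hv : ⇑v ⬝ᵥ ⇑v = 1 := by
    rw [← star_trivial (⇑v), ← EuclideanSpace.inner_eq_star_dotProduct, star_trivial,
      WithLp.toLp_ofLp, real_inner_self_eq_norm_sq,
      hA.eigenvectorBasis.orthonormal.1 j, one_pow]
  simpa [hA.eigenvalues_eq j, hv] using h v

-- Not an equality: for `w = 0` the normalizing factor is `(√0)⁻¹ = 0`.
theorem sum_sq_inv_sqrt_mul_le_one {κ : Type*} [Fintype κ] (w : κ → ℝ) :
    ∑ e, ((√(∑ e, w e ^ 2))⁻¹ * w e) ^ 2 ≤ 1 := by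
  simp only [mul_pow, ← mul_sum, inv_pow, Real.sq_sqrt (sum_nonneg fun e _ => sq_nonneg (w e))]
  exact inv_mul_le_one_of_le₀ le_rfl (by positivity)

theorem stmt_7_general (n q : ℕ) (ω : Fin n → Fin q → ℝ)
    (H : Matrix (Fin n) (Fin q) ℝ) (hH : ∀ i k, H i k = ω i k)
    (m : Fin n → ℝ) (hm : ∀ i, m i = ∑ e, (ω i e) ^ 2)
    (L : Matrix (Fin n) (Fin n) ℝ)
    (hL : L = (diagonal fun i => (Real.sqrt (m i))⁻¹) * (H * Hᵀ) *
      (diagonal fun i => (Real.sqrt (m i))⁻¹))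
    (hherm : L.IsHermitian)
    (maxSize : ℕ)
    (hmax : maxSize = Finset.univ.sup
      fun e : Fin q => (Finset.univ.filter fun i => ω i e ≠ 0).card) :
    ∀ j, hherm.eigenvalues j ≤ (maxSize : ℝ) := by
  simp_rw [← hH] at hm hmax
  set B := (diagonal fun i => (Real.sqrt (m i))⁻¹) * H
  have hLB : L = B * Bᵀ := by
    rw [hL, transpose_mul, diagonal_transpose]; simp only [B, Matrix.mul_assoc]
  have hB : ∀ i e, B i e = (Real.sqrt (m i))⁻¹ * H i e := fun i e => diagonal_mul _ _ _ _
  have hrow : ∀ i, ∑ e, B i e ^ 2 ≤ 1 := fun i => by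
    simpa only [hB, hm] using sum_sq_inv_sqrt_mul_le_one (H i)
  have hcol : ∀ e, #{i | B i e ≠ 0} ≤ maxSize := fun e =>
    calc #{i | B i e ≠ 0} ≤ #{i | H i e ≠ 0} :=
          card_le_card (monotone_filter_right _ fun i _ => by
            rw [hB]; exact right_ne_zero_of_mul)
      _ ≤ maxSize := hmax ▸ le_sup (f := fun e => #{i | H i e ≠ 0}) (mem_univ e)
  exact hherm.eigenvalues_le_of_dotProduct_mulVec_le fun x =>
    hLB ▸ B.dotProduct_mul_transpose_mulVec_le maxSize hrow hcol x

/-- The largest eigenvalue of the normalized Laplacian of a weighted hypergraph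
is at most the maximum edge size `∇`. (All eigenvalues are bounded by `∇`.) -/
theorem stmt_7 (n q : ℕ) (ω : Fin n → Fin q → ℝ)
    (H : Matrix (Fin n) (Fin q) ℝ) (hH : ∀ i k, H i k = ω i k)
    (m : Fin n → ℝ) (hm : ∀ i, m i = ∑ e, (ω i e) ^ 2)
    (hmpos : ∀ i, 0 < m i)
    (L : Matrix (Fin n) (Fin n) ℝ)
    (hL : L = (diagonal fun i => (Real.sqrt (m i))⁻¹) * (H * Hᵀ) *
      (diagonal fun i => (Real.sqrt (m i))⁻¹))
    (hherm : L.IsHermitian)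
    (maxSize : ℕ)
    (hmax : maxSize = Finset.univ.sup
      fun e : Fin q => (Finset.univ.filter fun i => ω i e ≠ 0).card) :
    ∀ j, hherm.eigenvalues j ≤ (maxSize : ℝ) :=
  stmt_7_general n q ω H hH m hm L hL hherm maxSize hmax
end

section
/- Let G be a DAG and G_M its moral graph. Then G_M is acyclic (a forest) if and only if G_M is bipartite. -/
/-!
A 2-colourable graph has no triangles. In the moral graph of `R` this forces every edge to join a
parent to its child, and every vertex to have at most one parent. On a cycle, a vertex of maximal
height (number of ancestors) has two distinct neighbours on the cycle, both lower, hence both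
parents of it: a contradiction. Conversely, every forest is bipartite.
-/

theorem Relation.exists_rank_of_not_transGen_self {V : Type*} [Fintype V] {R : V → V → Prop}
    (hacyclic : ∀ i, ¬ Relation.TransGen R i i) : ∃ h : V → ℕ, ∀ a b, R a b → h a < h b := by
  classical
  refine ⟨fun v => (Finset.univ.filter fun u => Relation.TransGen R u v).card, fun a b hab => ?_⟩
  refine Finset.card_lt_card ⟨fun u hu => ?_, fun hsub => ?_⟩
  · simp only [Finset.mem_filter, Finset.mem_univ, true_and] at hu ⊢
    exact hu.tail hab
  · exact hacyclic a (by simpa using hsub (by simpa using Relation.TransGen.single hab))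

namespace SimpleGraph

variable {V : Type*}

theorem isAcyclic_of_forall_adj_le_eq {G : SimpleGraph V} {α : Type*} [LinearOrder α] (f : V → α)
    (hf : ∀ v w₁ w₂, G.Adj v w₁ → G.Adj v w₂ → f w₁ ≤ f v → f w₂ ≤ f v → w₁ = w₂) :
    G.IsAcyclic := by
  classical
  intro u c hc
  obtain ⟨v, hv, hmax⟩ := c.support.toFinset.exists_max_image f ⟨u, by simp⟩
  have hv : v ∈ c.support := List.mem_toFinset.mp hv
  set c' := c.rotate v hv
  have hc' : c'.IsCycle := hc.rotate hv
  have hle : ∀ i, f (c'.getVert i) ≤ f v := fun i => hmax _ <| List.mem_toFinset.mpr <|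
    (Walk.mem_support_rotate_iff c v hv).mp (c'.getVert_mem_support i)
  exact hc'.snd_ne_penultimate <| hf v _ _ (c'.adj_snd hc'.not_nil)
    (c'.adj_penultimate hc'.not_nil).symm (hle 1) (hle _)

def moralGraph (R : V → V → Prop) : SimpleGraph V :=
  SimpleGraph.fromRel fun i j => R i j ∨ ∃ k, R i k ∧ R j k

variable {R : V → V → Prop}

theorem moralGraph_adj_of_rel {a b : V} (hab : R a b) (hne : a ≠ b) : (moralGraph R).Adj a b :=
  (fromRel_adj _ a b).mpr ⟨hne, .inl (.inl hab)⟩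

theorem moralGraph_adj_of_rel_of_rel {a b k : V} (ha : R a k) (hb : R b k) (hne : a ≠ b) :
    (moralGraph R).Adj a b :=
  (fromRel_adj _ a b).mpr ⟨hne, .inl (.inr ⟨k, ha, hb⟩)⟩

theorem rel_or_rel_of_moralGraph_adj (h3 : (moralGraph R).CliqueFree 3) {a b : V}
    (hab : (moralGraph R).Adj a b) : R a b ∨ R b a := by
  classical
  have common : ∀ k, R a k → R b k → R a b ∨ R b a := by
    intro k hak hbk
    by_cases hka : k = a
    · exact .inr (hka ▸ hbk)
    by_cases hkb : k = b
    · exact .inl (hkb ▸ hak)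
    exact (h3 {a, b, k} (is3Clique_triple_iff.mpr ⟨hab, moralGraph_adj_of_rel hak (Ne.symm hka),
      moralGraph_adj_of_rel hbk (Ne.symm hkb)⟩)).elim
  obtain ⟨-, (h | ⟨k, hak, hbk⟩) | (h | ⟨k, hbk, hak⟩)⟩ := (fromRel_adj _ a b).mp hab
  · exact .inl h
  · exact common k hak hbk
  · exact .inr h
  · exact common k hak hbk

theorem eq_of_rel_of_rel_of_moralGraph_cliqueFree (hirr : ∀ x, ¬ R x x)
    (h3 : (moralGraph R).CliqueFree 3) {x z y : V} (hx : R x y) (hz : R z y) : x = z := by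
  classical
  by_contra hne
  have hxy : x ≠ y := by rintro rfl; exact hirr x hx
  have hzy : z ≠ y := by rintro rfl; exact hirr z hz
  exact h3 {x, z, y} (is3Clique_triple_iff.mpr ⟨moralGraph_adj_of_rel_of_rel hx hz hne,
    moralGraph_adj_of_rel hx hxy, moralGraph_adj_of_rel hz hzy⟩)

theorem moralGraph_isAcyclic [Finite V] (hacyclic : ∀ i, ¬ Relation.TransGen R i i)
    (h3 : (moralGraph R).CliqueFree 3) : (moralGraph R).IsAcyclic := by
  have := Fintype.ofFinite V
  obtain ⟨h, hh⟩ := Relation.exists_rank_of_not_transGen_self hacyclic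
  have hirr : ∀ x, ¬ R x x := fun x hx => hacyclic x (.single hx)
  have rel_of_adj_of_le : ∀ {v w}, (moralGraph R).Adj v w → h w ≤ h v → R w v := fun hvw hle =>
    (rel_or_rel_of_moralGraph_adj h3 hvw).resolve_left fun hr => (hh _ _ hr).not_ge hle
  exact isAcyclic_of_forall_adj_le_eq h fun v w₁ w₂ h₁ h₂ hle₁ hle₂ =>
    eq_of_rel_of_rel_of_moralGraph_cliqueFree hirr h3
      (rel_of_adj_of_le h₁ hle₁) (rel_of_adj_of_le h₂ hle₂)

end SimpleGraph

/-- For a DAG `G` with moral graph `G_M`, `G_M` is a forest iff `G_M` is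
bipartite (i.e., 2-colorable). -/
theorem stmt_11 (n : ℕ) (R : Fin n → Fin n → Prop)
    (hacyclic : ∀ i, ¬ Relation.TransGen R i i)
    (GM : SimpleGraph (Fin n))
    (hGM : GM = SimpleGraph.fromRel fun i j => R i j ∨ ∃ k, R i k ∧ R j k) :
    GM.IsAcyclic ↔ GM.Colorable 2 := by
  subst hGM
  change (SimpleGraph.moralGraph R).IsAcyclic ↔ (SimpleGraph.moralGraph R).Colorable 2
  exact ⟨SimpleGraph.IsAcyclic.colorable_two,
    fun h2 => SimpleGraph.moralGraph_isAcyclic hacyclic (h2.cliqueFree (by norm_num))⟩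
end

section
/- Let X be a linear Bayesian Network whose moral graph G_M is a tree (or forest). Then the largest eigenvalue of the normalized inverse covariance matrix Ω of X satisfies λ_1(Ω) ≤ 2. -/
open Matrix BigOperators

/-- If the moral graph of a linear Bayesian Network is a tree (or forest), then
the largest eigenvalue of the normalized inverse covariance matrix `Ω` is at
most 2 (all eigenvalues are at most 2). -/
theorem stmt_13 (p : ℕ) (A : Matrix (Fin p) (Fin p) ℝ) (hA : IsNilpotent A)
    -- the DAG has an edge `i → j` exactly when `A i j ≠ 0`
    (hacyclic : ∀ i, ¬ Relation.TransGen (fun i j => A i j ≠ 0) i i)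
    (GM : SimpleGraph (Fin p))
    (hGM : GM = SimpleGraph.fromRel fun i j =>
      A i j ≠ 0 ∨ ∃ k, A i k ≠ 0 ∧ A j k ≠ 0)
    (hforest : GM.IsAcyclic)
    (σ : Fin p → ℝ) (hσ : ∀ k, 0 < σ k)
    (Cε Cov Om : Matrix (Fin p) (Fin p) ℝ)
    (hCε : Cε = diagonal fun k => (σ k) ^ 2)
    (hCov : Cov = (1 - Aᵀ)⁻¹ * Cε * (1 - A)⁻¹)
    (hOm : Om = (diagonal fun i => (Real.sqrt (Cov⁻¹ i i))⁻¹) * Cov⁻¹ *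
      (diagonal fun i => (Real.sqrt (Cov⁻¹ i i))⁻¹))
    (hherm : Om.IsHermitian) :
    ∀ j, hherm.eigenvalues j ≤ 2 := by
  -- A has zero diagonal
  have hAdiag : ∀ i, A i i = 0 := by
    intro i; by_contra h; exact hacyclic i (Relation.TransGen.single h)
  -- each column of A has at most one nonzero entry
  have hcol : ∀ k i j, A i k ≠ 0 → A j k ≠ 0 → i = j := by
    intro k i j hi hj
    by_contra hij
    have hik : i ≠ k := fun h => hi (h ▸ hAdiag k)
    have hjk : j ≠ k := fun h => hj (h ▸ hAdiag k)
    have e1 : GM.Adj i j := by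
      rw [hGM, SimpleGraph.fromRel_adj]; exact ⟨hij, Or.inl (Or.inr ⟨k, hi, hj⟩)⟩
    have e2 : GM.Adj j k := by
      rw [hGM, SimpleGraph.fromRel_adj]; exact ⟨hjk, Or.inl (Or.inl hj)⟩
    have e3 : GM.Adj k i := by
      rw [hGM, SimpleGraph.fromRel_adj]; exact ⟨Ne.symm hik, Or.inr (Or.inl hi)⟩
    exact hforest (SimpleGraph.Walk.cons e1 (SimpleGraph.Walk.cons e2
        (SimpleGraph.Walk.cons e3 SimpleGraph.Walk.nil)))
      (by simp_all [SimpleGraph.Walk.isCycle_def, SimpleGraph.Walk.isTrail_def, Sym2.eq,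
            Sym2.rel_iff', SimpleGraph.Walk.edges, ne_comm])
  set d : Fin p → ℝ := fun k => ((σ k) ^ 2)⁻¹ with hd
  have hdpos : ∀ k, 0 < d k := fun k => inv_pos.mpr (pow_pos (hσ k) 2)
  set B : Matrix (Fin p) (Fin p) ℝ := 1 - A with hB
  set K : Matrix (Fin p) (Fin p) ℝ := B * diagonal d * Bᵀ with hK
  -- Cov⁻¹ = K
  have hUA : IsUnit (1 - A).det := (isUnit_iff_isUnit_det _).mp hA.isUnit_one_sub
  have hTB : Bᵀ = 1 - Aᵀ := by simp [hB, transpose_sub]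
  have hUAT : IsUnit (1 - Aᵀ).det := by
    rw [← hTB, det_transpose]; exact hUA
  have hCεd : Cε * diagonal d = 1 := by
    rw [hCε, hd, diagonal_mul_diagonal]
    rw [show (fun k => σ k ^ 2 * (σ k ^ 2)⁻¹) = fun _ => (1:ℝ) from
      funext fun k => mul_inv_cancel₀ (pow_ne_zero 2 (hσ k).ne')]
    exact diagonal_one
  have hKinv : Cov⁻¹ = K := by
    apply Matrix.inv_eq_right_inv
    rw [hCov, hK]
    have : (1 - Aᵀ)⁻¹ * Cε * (1 - A)⁻¹ * (B * diagonal d * Bᵀ)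
        = (1 - Aᵀ)⁻¹ * (Cε * (((1 - A)⁻¹ * B) * diagonal d) * Bᵀ) := by
      simp only [Matrix.mul_assoc]
    rw [this, hB, nonsing_inv_mul _ hUA, Matrix.one_mul, hCεd, Matrix.one_mul, ← hB, hTB,
      nonsing_inv_mul _ hUAT]
  -- entries of K
  have hKapp : ∀ i j, K i j = ∑ k, B i k * d k * B j k := by
    intro i j
    rw [hK, Matrix.mul_apply]
    refine Finset.sum_congr rfl fun k _ => ?_
    rw [Matrix.mul_diagonal, Matrix.transpose_apply]
  have hBsq : ∀ i k, (B i k) ^ 2 = (if i = k then 1 else 0) + (A i k) ^ 2 := by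
    intro i k
    by_cases h : i = k
    · subst h; simp [hB, Matrix.sub_apply, Matrix.one_apply, hAdiag]
    · simp [hB, Matrix.sub_apply, Matrix.one_apply, h]
  have hKdiag : ∀ i, K i i = d i + ∑ k, d k * (A i k) ^ 2 := by
    intro i
    rw [hKapp]
    have : ∀ k, B i k * d k * B i k = d k * (if i = k then 1 else 0) + d k * (A i k) ^ 2 := by
      intro k
      have : B i k * d k * B i k = d k * (B i k) ^ 2 := by ring
      rw [this, hBsq, mul_add]
    simp only [this, Finset.sum_add_distrib, mul_ite, mul_one, mul_zero,
      Finset.sum_ite_eq, Finset.sum_ite_eq', Finset.mem_univ, if_true]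
  have hKpos : ∀ i, 0 < K i i := by
    intro i
    rw [hKdiag]
    have : (0:ℝ) ≤ ∑ k, d k * (A i k) ^ 2 :=
      Finset.sum_nonneg fun k _ => mul_nonneg (hdpos k).le (sq_nonneg _)
    linarith [hdpos i]
  -- quadratic form of K
  have hq : ∀ x : Fin p → ℝ, x ⬝ᵥ K *ᵥ x = ∑ k, d k * (∑ i, B i k * x i) ^ 2 := by
    intro x
    have h1 : K *ᵥ x = B *ᵥ (diagonal d *ᵥ (Bᵀ *ᵥ x)) := by
      rw [mulVec_mulVec, mulVec_mulVec, hK]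
    have hxB : x ᵥ* B = fun k => ∑ i, B i k * x i := by
      funext k; simp [vecMul, dotProduct, mul_comm]
    have hBTx : Bᵀ *ᵥ x = fun k => ∑ i, B i k * x i := by
      funext k; simp [mulVec, dotProduct, transpose_apply]
    rw [h1, dotProduct_mulVec, hxB, hBTx]
    simp only [dotProduct, mulVec_diagonal]
    exact Finset.sum_congr rfl fun k _ => by ring
  -- square of sum over a column = sum of squares
  have hs : ∀ (k : Fin p) (x : Fin p → ℝ),
      (∑ i, A i k * x i) ^ 2 = ∑ i, (A i k * x i) ^ 2 := by
    intro k x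
    rw [sq, Finset.sum_mul_sum]
    refine Finset.sum_congr rfl fun i _ => ?_
    rcases eq_or_ne (A i k) 0 with h | h
    · simp [h]
    · rw [Finset.sum_eq_single i]
      · ring
      · intro j _ hj
        have : A j k = 0 := by
          by_contra hj0; exact hj (hcol k j i hj0 h)
        simp [this]
      · intro hn; exact absurd (Finset.mem_univ i) hn
  have key : ∀ x : Fin p → ℝ, x ⬝ᵥ K *ᵥ x ≤ 2 * ∑ i, K i i * x i ^ 2 := by
    intro x
    rw [hq]
    have hy : ∀ k, ∑ i, B i k * x i = x k - ∑ i, A i k * x i := by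
      intro k
      simp only [hB, Matrix.sub_apply, Matrix.one_apply, sub_mul, Finset.sum_sub_distrib,
        ite_mul, one_mul, zero_mul, Finset.sum_ite_eq', Finset.mem_univ, if_true]
    have step1 : ∑ k, d k * (∑ i, B i k * x i) ^ 2
        ≤ ∑ k, d k * (2 * x k ^ 2 + 2 * ∑ i, (A i k * x i) ^ 2) := by
      refine Finset.sum_le_sum fun k _ => ?_
      refine mul_le_mul_of_nonneg_left ?_ (hdpos k).le
      rw [hy, ← hs]
      nlinarith [sq_nonneg (x k + ∑ i, A i k * x i)]
    refine step1.trans (le_of_eq ?_)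
    have expand : ∀ k, d k * (2 * x k ^ 2 + 2 * ∑ i, (A i k * x i) ^ 2)
        = 2 * (d k * x k ^ 2) + ∑ i, 2 * (d k * (A i k) ^ 2 * x i ^ 2) := by
      intro k
      rw [mul_add, Finset.mul_sum]
      congr 1
      · ring
      · rw [Finset.mul_sum]
        exact Finset.sum_congr rfl fun i _ => by ring
    simp only [expand, Finset.sum_add_distrib]
    rw [Finset.sum_comm]
    simp only [hKdiag]
    rw [Finset.mul_sum, ← Finset.sum_add_distrib]
    refine Finset.sum_congr rfl fun i _ => ?_
    have h2 : ∑ k, 2 * (d k * A i k ^ 2 * x i ^ 2) = (∑ k, d k * A i k ^ 2) * (2 * x i ^ 2) := by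
      rw [Finset.sum_mul]
      exact Finset.sum_congr rfl fun k _ => by ring
    rw [h2]
    ring
  -- quadratic form of Om
  set s : Fin p → ℝ := fun i => (Real.sqrt (K i i))⁻¹ with hsdef
  have hOm' : Om = diagonal s * K * diagonal s := by
    rw [hOm, hKinv]
  have hKs : ∀ i, K i i * s i ^ 2 = 1 := by
    intro i
    rw [hsdef]
    have h0 : Real.sqrt (K i i) ^ 2 = K i i := Real.sq_sqrt (hKpos i).le
    rw [inv_pow, h0]
    exact mul_inv_cancel₀ (hKpos i).ne'
  have homq : ∀ x : Fin p → ℝ, x ⬝ᵥ Om *ᵥ x ≤ 2 * ∑ i, x i ^ 2 := by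
    intro x
    set y : Fin p → ℝ := fun i => s i * x i with hy
    have h1 : x ⬝ᵥ Om *ᵥ x = y ⬝ᵥ K *ᵥ y := by
      rw [hOm']
      have : (diagonal s * K * diagonal s) *ᵥ x = diagonal s *ᵥ (K *ᵥ (diagonal s *ᵥ x)) := by
        rw [mulVec_mulVec, mulVec_mulVec]
      rw [this]
      have h2 : diagonal s *ᵥ x = y := by
        funext i; rw [mulVec_diagonal]
      rw [h2]
      simp only [dotProduct, mulVec_diagonal, hy]
      exact Finset.sum_congr rfl fun i _ => by ring
    rw [h1]
    refine (key y).trans (le_of_eq ?_)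
    refine congrArg _ (Finset.sum_congr rfl fun i _ => ?_)
    rw [hy]
    have : K i i * (s i * x i) ^ 2 = (K i i * s i ^ 2) * x i ^ 2 := by ring
    rw [this, hKs, one_mul]
  -- eigenvalues
  intro j
  set v : Fin p → ℝ := (WithLp.equiv 2 _) (hherm.eigenvectorBasis j) with hv
  have hev : Om *ᵥ v = hherm.eigenvalues j • v := hherm.mulVec_eigenvectorBasis j
  have hnorm : ∑ i, v i ^ 2 = 1 := by
    have horth := hherm.eigenvectorBasis.orthonormal
    rw [orthonormal_iff_ite] at horth
    have h11 := horth j j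
    simp only [if_pos rfl] at h11
    rw [PiLp.inner_apply] at h11
    simpa [hv, sq] using h11
  have hq1 : v ⬝ᵥ Om *ᵥ v = hherm.eigenvalues j := by
    rw [hev, dotProduct_smul]
    have : v ⬝ᵥ v = 1 := by
      rw [← hnorm]; exact Finset.sum_congr rfl fun i _ => (sq (v i)).symm
    rw [smul_eq_mul, this, mul_one]
  have := homq v
  rw [hq1, hnorm, mul_one] at this
  exact this
end

section
/- Let X be a linear Bayesian Network whose moral graph G_M is a tree, and suppose the normalized adjacency matrix C(G_ST) of the structural hypergraph has zero entries exactly where the adjacency matrix of G_M has zero entries. Then the eigenvalues of the normalized inverse covariance matrix Ω = I - C(G_ST) are additively symmetric about 1. -/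
open Matrix BigOperators

open SimpleGraph in
lemma tree_path_parity {V : Type*} [DecidableEq V] {G : SimpleGraph V} (ht : G.IsTree) (r : V)
    (len : V → ℕ)
    (hlen : ∀ v, ∃ q : G.Walk r v, q.IsPath ∧ q.length = len v)
    {u v : V} (huv : G.Adj u v) :
    ¬ (Even (len u) ↔ Even (len v)) := by
  obtain ⟨pu, hpu, hlu⟩ := hlen u
  obtain ⟨pv, hpv, hlv⟩ := hlen v
  by_cases hv : v ∈ pu.support
  · -- pv = pu.takeUntil v, and dropUntil is the single edge
    have h1 : pv = pu.takeUntil v hv := (ht.existsUnique_path r v).unique hpv (hpu.takeUntil hv)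
    have h2 : (pu.dropUntil v hv) = Walk.cons huv.symm Walk.nil := by
      refine (ht.existsUnique_path v u).unique (hpu.dropUntil hv) ?_
      exact Walk.IsPath.nil.cons (by simpa using huv.ne')
    have h3 : (pu.takeUntil v hv).length + (pu.dropUntil v hv).length = pu.length := by
      rw [← Walk.length_append, Walk.take_spec]
    rw [h2] at h3
    simp only [Walk.length_cons, Walk.length_nil] at h3
    have h4 : len v + 1 = len u := by rw [← hlu, ← hlv, h1]; exact h3
    rw [← h4, Nat.even_add_one]; tauto
  · -- pv = pu extended by the edge u-v
    have hpath : (Walk.cons huv.symm pu.reverse).reverse.IsPath := by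
      refine Walk.IsPath.reverse ?_
      exact hpu.reverse.cons (by simpa using hv)
    have h1 : pv = (Walk.cons huv.symm pu.reverse).reverse :=
      (ht.existsUnique_path r v).unique hpv hpath
    have h4 : len v = len u + 1 := by
      rw [← hlu, ← hlv, h1]
      simp [Walk.length_reverse, Nat.add_comm]
    rw [h4, Nat.even_add_one]; tauto


/-- If the moral graph of a linear Bayesian Network is a tree and the
normalized adjacency matrix `C(G_ST)` of the structural hypergraph has zero
entries exactly where the moral graph's adjacency matrix does, then the
eigenvalues of `Ω = I - C(G_ST)` are additively symmetric about 1. -/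
theorem stmt_16 (p : ℕ) (A : Matrix (Fin p) (Fin p) ℝ) (hA : IsNilpotent A)
    (hacyclic : ∀ i, ¬ Relation.TransGen (fun i j => A i j ≠ 0) i i)
    (GM : SimpleGraph (Fin p))
    (hGM : GM = SimpleGraph.fromRel fun i j =>
      A i j ≠ 0 ∨ ∃ k, A i k ≠ 0 ∧ A j k ≠ 0)
    (htree : GM.IsTree)
    (σ : Fin p → ℝ) (hσ : ∀ k, 0 < σ k)
    (ω : Fin p → Fin p → ℝ)
    (hω : ∀ i k, ω i k = if i = k then (σ k)⁻¹ else -(A i k) / σ k)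
    (m : Fin p → ℝ) (hm : ∀ i, m i = ∑ e, (ω i e) ^ 2)
    (C Om : Matrix (Fin p) (Fin p) ℝ)
    -- normalized adjacency matrix of the structural hypergraph
    (hC : ∀ i j, C i j = if i = j then 0 else
      -(∑ e, ω i e * ω j e) / (Real.sqrt (m i) * Real.sqrt (m j)))
    -- zero-pattern correspondence with the moral graph
    (hzero : ∀ i j, C i j = 0 ↔ ¬ GM.Adj i j)
    (hOm : Om = 1 - C) :
    ∀ lam : ℝ, (∃ v, v ≠ 0 ∧ Om *ᵥ v = lam • v) →
      (∃ v, v ≠ 0 ∧ Om *ᵥ v = (2 - lam) • v) := by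
  classical
  rintro lam ⟨v, hv0, hvE⟩
  obtain ⟨r⟩ : Nonempty (Fin p) := htree.isConnected.nonempty
  choose q hq using fun x => (htree.existsUnique_path r x).exists
  set len : Fin p → ℕ := fun x => (q x).length with hlendef
  have hlen : ∀ x, ∃ w : GM.Walk r x, w.IsPath ∧ w.length = len x :=
    fun x => ⟨q x, hq x, rfl⟩
  set s : Fin p → ℝ := fun x => if Even (len x) then 1 else -1 with hsdef
  have hsne : ∀ x, s x ≠ 0 := by
    intro x; simp only [hsdef]; split <;> norm_num
  have hadj : ∀ i j, GM.Adj i j → s j = -s i := by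
    intro i j h
    have hpar := tree_path_parity htree r len hlen h
    by_cases h1 : Even (len i) <;> by_cases h2 : Even (len j) <;>
      simp only [hsdef, h1, h2, if_true, if_false, if_pos, if_neg, not_false_iff] <;>
      first | (exfalso; tauto) | norm_num
  have hCv : C *ᵥ v = (1 - lam) • v := by
    have h := hvE
    rw [hOm, sub_mulVec, one_mulVec] at h
    funext i
    have := congrFun h i
    simp only [Pi.sub_apply, Pi.smul_apply, smul_eq_mul] at this ⊢
    linarith
  refine ⟨fun x => s x * v x, ?_, ?_⟩
  · intro hw
    apply hv0
    funext i
    have := congrFun hw i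
    simp only [Pi.zero_apply] at this ⊢
    rcases mul_eq_zero.mp this with h | h
    · exact absurd h (hsne i)
    · exact h
  · funext i
    have key : (C *ᵥ fun x => s x * v x) i = -s i * ((C *ᵥ v) i) := by
      simp only [mulVec, dotProduct]
      rw [Finset.mul_sum]
      refine Finset.sum_congr rfl fun j _ => ?_
      by_cases hz : C i j = 0
      · simp [hz]
      · have hadj' : GM.Adj i j := by
          by_contra hn
          exact hz ((hzero i j).mpr hn)
        rw [hadj i j hadj']
        ring
    rw [hOm]
    have hCvi := congrFun hCv i
    simp only [Pi.smul_apply, smul_eq_mul] at hCvi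
    simp only [sub_mulVec, one_mulVec, Pi.sub_apply, Pi.smul_apply, smul_eq_mul, key, hCvi]
    ring
end

section
/- Let X be a linear Bayesian Network with structural hypergraph G_ST and moral graph G_M with adjacency matrix A_M. Assume (faithfulness) that for i ≠ j, Σ_{e∈E} ω(v_i,e)ω(v_j,e) = 0 implies ω(v_i,e_k)ω(v_j,e_k) = 0 for all edges e_k. Then for i ≠ j, the (i,j) entry of the normalized adjacency matrix C(G_ST) is zero if and only if (A_M)_{ij} = 0. -/
open Matrix BigOperators

/-- Under faithfulness, for `i ≠ j` the `(i,j)` entry of the normalized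
adjacency matrix `C(G_ST)` of the structural hypergraph is zero iff `v_i` and
`v_j` are not adjacent in the moral graph (whose adjacency records the
existence of a hyperedge incident to both vertices). -/
theorem stmt_19 (p q : ℕ) (ω : Fin p → Fin q → ℝ)
    (m : Fin p → ℝ) (hm : ∀ i, m i = ∑ e, (ω i e) ^ 2)
    (hmpos : ∀ i, 0 < m i)
    (C : Matrix (Fin p) (Fin p) ℝ)
    (hC : ∀ i j, i ≠ j → C i j =
      -(∑ e, ω i e * ω j e) / Real.sqrt (m i * m j))
    (GM : SimpleGraph (Fin p))
    (hGM : ∀ i j, GM.Adj i j ↔ i ≠ j ∧ ∃ k, ω i k * ω j k ≠ 0)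
    -- faithfulness
    (hfaith : ∀ i j, i ≠ j → (∑ e, ω i e * ω j e) = 0 →
      ∀ k, ω i k * ω j k = 0) :
    ∀ i j, i ≠ j → (C i j = 0 ↔ ¬ GM.Adj i j) := by
  intro i j hij
  have hsq : Real.sqrt (m i * m j) ≠ 0 := by
    exact ne_of_gt (Real.sqrt_pos.mpr (mul_pos (hmpos i) (hmpos j)))
  rw [hC i j hij, div_eq_zero_iff, neg_eq_zero]
  constructor
  · rintro (hsum | h)
    · rw [hGM]
      rintro ⟨-, k, hk⟩
      exact hk (hfaith i j hij hsum k)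
    · exact absurd h hsq
  · intro hadj
    left
    rw [hGM] at hadj
    push_neg at hadj
    have : ∀ k, ω i k * ω j k = 0 := hadj hij
    simp [this]
end
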